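/- Let $S_1, \ldots, S_M$ be $n \times n$ real symmetric positive definite matrices. Then the $M \times M$ real matrix $G$ with entries $G_{ij} = \det\big((\tfrac{1}{2}S_i^{-1} + \tfrac{1}{2}S_j^{-1})^{-1}\big)^{1/2} \big/ \big(\det(S_i)^{1/4}\det(S_j)^{1/4}\big)$ is symmetric and positive semidefinite. -/

import Mathlib

/-!
Up to normalisation, `x ↦ exp (-½ xᵀ S⁻¹ x)` is the square root of a Gaussian density, and the
product of two of them is again a Gaussian `exp (-xᵀ P x)` with `P = ½ S⁻¹ + ½ T⁻¹`. Writing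
`P = Bᵀ B`, the substitution `y = B x` reduces its integral to the standard Gaussian integral,
which gives `π ^ (n / 2) / √(det P)`; hence every kernel value is an `L²` inner product, and the
kernel matrix is a Gram matrix.
-/
open Matrix MeasureTheory Real

section LinearChangeOfVariables

variable {E F : Type*} [NormedAddCommGroup E] [NormedSpace ℝ E] [MeasurableSpace E] [BorelSpace E]
  [FiniteDimensional ℝ E] [NormedAddCommGroup F] [NormedSpace ℝ F]
  (μ : Measure E) [μ.IsAddHaarMeasure] {f : E →ₗ[ℝ] E}

theorem MeasureTheory.integral_comp_linearMap (hf : LinearMap.det f ≠ 0) (g : E → F) :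
    ∫ x, g (f x) ∂μ = |(LinearMap.det f)⁻¹| • ∫ y, g y ∂μ := by
  have hemb := (f.equivOfDetNeZero hf).toContinuousLinearEquiv.toHomeomorph.measurableEmbedding
  calc ∫ x, g (f x) ∂μ = ∫ y, g y ∂μ.map f := (hemb.integral_map g).symm
    _ = _ := by
      rw [Measure.map_linearMap_addHaar_eq_smul_addHaar μ hf, integral_smul_measure,
        ENNReal.toReal_ofReal (abs_nonneg _)]

end LinearChangeOfVariables

theorem MeasureTheory.posSemidef_matrix_integral_mul {ι α : Type*} [Finite ι] [MeasurableSpace α]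
    {μ : Measure α} {f : ι → α → ℝ} (hf : ∀ i, MemLp (f i) 2 μ) :
    (Matrix.of fun i j => ∫ x, f i x * f j x ∂μ).PosSemidef := by
  have hinner (i j : ι) :
      inner ℝ (hf i).toLp (hf j).toLp = ∫ x, f i x * f j x ∂μ := by
    rw [L2.inner_def]
    refine integral_congr_ae ?_
    filter_upwards [(hf i).coeFn_toLp, (hf j).coeFn_toLp] with x hi hj
    rw [hi, hj, real_inner_eq_re_inner, RCLike.inner_apply]
    simp [mul_comm]
  simp_rw [← hinner]
  exact posSemidef_gram ℝ _

variable {ι : Type*} [Fintype ι] [DecidableEq ι]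

theorem Matrix.PosDef.integral_exp_neg_dotProduct_mulVec {A : Matrix ι ι ℝ} (hA : A.PosDef) :
    ∫ x : EuclideanSpace ℝ ι, rexp (-(x ⬝ᵥ A *ᵥ x)) = π ^ (Fintype.card ι / 2 : ℝ) / √A.det := by
  open scoped MatrixOrder in
  obtain ⟨B, rfl⟩ := CStarAlgebra.nonneg_iff_eq_star_mul_self.mp hA.posSemidef.nonneg
  have hdet : (star B * B).det = B.det ^ 2 := by
    rw [det_mul, star_eq_conjTranspose, det_conjTranspose, star_trivial, sq]
  have hquad (x : EuclideanSpace ℝ ι) :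
      x ⬝ᵥ (star B * B) *ᵥ x = ‖toLpLin 2 2 B x‖ ^ 2 := by
    rw [EuclideanSpace.real_norm_sq_eq, toLpLin_apply, ← mulVec_mulVec, dotProduct_mulVec,
      star_eq_conjTranspose, vecMul_conjTranspose, star_trivial, dotProduct]
    simp [sq]
  have hB : LinearMap.det (toLpLin 2 2 B) ≠ 0 := by
    rw [LinearMap.det_toLpLin]
    exact fun h => hA.det_pos.ne' (by rw [hdet, h, zero_pow two_ne_zero])
  have hgauss := GaussianFourier.integral_rexp_neg_mul_sq_norm (V := EuclideanSpace ℝ ι) one_pos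
  simp only [neg_mul, one_mul, div_one, finrank_euclideanSpace] at hgauss
  simp_rw [hquad]
  rw [integral_comp_linearMap volume hB (fun v => rexp (-‖v‖ ^ 2)), hgauss, hdet,
    LinearMap.det_toLpLin, sqrt_sq_eq_abs, smul_eq_mul, abs_inv, inv_mul_eq_div]

/-- The square root of the density of the centred Gaussian with covariance `S / 2`. -/
noncomputable def sqrtGaussianDensity (S : Matrix ι ι ℝ) (x : EuclideanSpace ℝ ι) : ℝ :=
  rexp (-(x ⬝ᵥ ((1 / 2 : ℝ) • S⁻¹) *ᵥ x)) / (π ^ Fintype.card ι * S.det) ^ (1 / 4 : ℝ)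

theorem sqrtGaussianDensity_mul (S T : Matrix ι ι ℝ) (x : EuclideanSpace ℝ ι) :
    sqrtGaussianDensity S x * sqrtGaussianDensity T x =
      rexp (-(x ⬝ᵥ ((1 / 2 : ℝ) • S⁻¹ + (1 / 2 : ℝ) • T⁻¹) *ᵥ x)) /
        ((π ^ Fintype.card ι * S.det) ^ (1 / 4 : ℝ) *
          (π ^ Fintype.card ι * T.det) ^ (1 / 4 : ℝ)) := by
  rw [sqrtGaussianDensity, sqrtGaussianDensity, div_mul_div_comm, ← exp_add, add_mulVec,
    dotProduct_add, neg_add]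

theorem integral_sqrtGaussianDensity_mul {S T : Matrix ι ι ℝ} (hS : S.PosDef) (hT : T.PosDef) :
    ∫ x, sqrtGaussianDensity S x * sqrtGaussianDensity T x =
      (((1 / 2 : ℝ) • S⁻¹ + (1 / 2 : ℝ) • T⁻¹)⁻¹).det ^ (1 / 2 : ℝ) /
        (S.det ^ (1 / 4 : ℝ) * T.det ^ (1 / 4 : ℝ)) := by
  set P := (1 / 2 : ℝ) • S⁻¹ + (1 / 2 : ℝ) • T⁻¹
  have hP : P.PosDef := (hS.inv.smul one_half_pos).add (hT.inv.smul one_half_pos)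
  have hπ : (π ^ Fintype.card ι) ^ (1 / 4 : ℝ) * (π ^ Fintype.card ι) ^ (1 / 4 : ℝ) =
      π ^ (Fintype.card ι / 2 : ℝ) := by
    rw [← mul_rpow (by positivity) (by positivity), ← pow_add, ← rpow_natCast, ← rpow_mul pi_pos.le]
    congr 1
    push_cast
    ring
  simp_rw [sqrtGaussianDensity_mul]
  rw [integral_div, hP.integral_exp_neg_dotProduct_mulVec, det_nonsing_inv, Ring.inverse_eq_inv',
    inv_rpow hP.det_pos.le, ← sqrt_eq_rpow, mul_rpow (by positivity) hS.det_pos.le,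
    mul_rpow (by positivity) hT.det_pos.le, ← hπ]
  field_simp

theorem memLp_sqrtGaussianDensity {S : Matrix ι ι ℝ} (hS : S.PosDef) :
    MemLp (sqrtGaussianDensity S) 2 := by
  have hcont : Continuous (sqrtGaussianDensity S) := by
    unfold sqrtGaussianDensity
    fun_prop
  refine (memLp_two_iff_integrable_sq hcont.aestronglyMeasurable).mpr
    (Integrable.of_integral_ne_zero (ne_of_gt ?_))
  have hdet := hS.det_pos
  simp_rw [sq, integral_sqrtGaussianDensity_mul hS hS]
  rw [← add_smul, add_halves, one_smul, nonsing_inv_nonsing_inv _ hdet.ne'.isUnit]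
  positivity

theorem lg_kernel_gram_posSemidef {n M : ℕ}
    (S : Fin M → Matrix (Fin n) (Fin n) ℝ) (hS : ∀ i, (S i).PosDef)
    (G : Matrix (Fin M) (Fin M) ℝ)
    (hG : ∀ i j, G i j =
      (((1 / 2 : ℝ) • (S i)⁻¹ + (1 / 2 : ℝ) • (S j)⁻¹)⁻¹).det ^ ((1 : ℝ) / 2) /
        ((S i).det ^ ((1 : ℝ) / 4) * (S j).det ^ ((1 : ℝ) / 4))) :
    G.IsSymm ∧ G.PosSemidef := by
  have hG_integral : G = Matrix.of fun i j =>
      ∫ x, sqrtGaussianDensity (S i) x * sqrtGaussianDensity (S j) x := by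
    ext i j
    rw [hG, of_apply, integral_sqrtGaussianDensity_mul (hS i) (hS j)]
  have hG_psd : G.PosSemidef :=
    hG_integral ▸ posSemidef_matrix_integral_mul fun i => memLp_sqrtGaussianDensity (hS i)
  exact ⟨isHermitian_iff_isSymm.mp hG_psd.isHermitian, hG_psd⟩
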